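/- arXiv:math/0507365 — 2 statements merged into one kernel-verified Lean document; each statement's English description precedes it below -/
import Mathlib

section
/- Let φₙ : [0,T] → ℝ be integrable functions with relaxation seminorms ‖φₙ‖_rx → 0 as n → ∞. Let {r_β : β ∈ B} be a family of absolutely continuous functions on [0,T] such that there exists C with ‖r_β(0)‖² + ∫₀ᵀ (ṙ_β(τ))² dτ ≤ C² for all β ∈ B. Then ‖r_β · φₙ‖_rx → 0 as n → ∞, uniformly in β ∈ B. More precisely, for every τ ∈ [0,T], |∫₀^τ r_β(t) φₙ(t) dt| ≤ C(1 + 2√τ) ‖φₙ‖_rx. -/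
/-!
Write `r = r 0 + R` with `R t = ∫₀ᵗ r'` and let `Φ` be the primitive of `φ`, so `|Φ| ≤ ‖φ‖_rx`
on `[0,T]`. Integrating by parts, `∫₀ᵗ R φ = R t * Φ t - ∫₀ᵗ r' Φ`, hence
`|∫₀ᵗ R φ| ≤ 2 ‖φ‖_rx ∫₀ᵗ |r'| ≤ 2 ‖φ‖_rx √t C` by Cauchy–Schwarz, while `r 0 * Φ τ` contributes
at most `C ‖φ‖_rx`. The bound depends on `β` only through `C`, which gives uniform convergence.
-/

open MeasureTheory Real Filter

/-- Relaxation seminorm of an integrable function on `[0,T]`. -/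
noncomputable def relaxNorm (T : ℝ) (u : ℝ → ℝ) : ℝ :=
  sSup ((fun t => |∫ τ in (0:ℝ)..t, u τ|) '' Set.Icc 0 T)

open Set

theorem IntervalIntegrable.ae_deriv_integral_eq {f : ℝ → ℝ} {a b : ℝ}
    (hf : IntervalIntegrable f volume a b) :
    ∀ᵐ x, x ∈ uIoc a b → deriv (fun x => ∫ s in a..x, f s) x = f x := by
  filter_upwards [hf.ae_hasDerivAt_integral] with x hx hxab
  exact (hx (uIoc_subset_uIcc hxab) a left_mem_uIcc).deriv

theorem intervalIntegral.integral_primitive_mul_eq {ρ f : ℝ → ℝ} {a b : ℝ}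
    (hρ : IntervalIntegrable ρ volume a b) (hf : IntervalIntegrable f volume a b) :
    ∫ x in a..b, (∫ s in a..x, ρ s) * f x =
      (∫ x in a..b, ρ x) * (∫ x in a..b, f x) - ∫ x in a..b, ρ x * ∫ s in a..x, f s := by
  have ibp := (hρ.absolutelyContinuousOnInterval_intervalIntegral left_mem_uIcc
    ).integral_mul_deriv_eq_deriv_mul
    (hf.absolutelyContinuousOnInterval_intervalIntegral left_mem_uIcc)
  simp only [intervalIntegral.integral_same, zero_mul, sub_zero] at ibp
  convert ibp using 1
  · apply intervalIntegral.integral_congr_ae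
    filter_upwards [hf.ae_deriv_integral_eq] with x hx hxab
    rw [hx hxab]
  · congr 1
    apply intervalIntegral.integral_congr_ae
    filter_upwards [hρ.ae_deriv_integral_eq] with x hx hxab
    rw [hx hxab]

theorem intervalIntegral.integral_abs_le_sqrt_mul_sqrt {ρ : ℝ → ℝ} {a b : ℝ} (hab : a ≤ b)
    (hρ : IntervalIntegrable ρ volume a b)
    (hρ2 : IntervalIntegrable (fun x => ρ x ^ 2) volume a b) :
    ∫ x in a..b, |ρ x| ≤ √(b - a) * √(∫ x in a..b, ρ x ^ 2) := by
  rw [intervalIntegrable_iff_integrableOn_Ioc_of_le hab] at hρ hρ2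
  have hL2 : MemLp (fun x => |ρ x|) (ENNReal.ofReal 2) (volume.restrict (Ioc a b)) := by
    rw [ENNReal.ofReal_ofNat, memLp_two_iff_integrable_sq hρ.abs.aestronglyMeasurable]
    simpa only [sq_abs] using hρ2.integrable
  have holder := integral_mul_le_Lp_mul_Lq_of_nonneg Real.HolderConjugate.two_two
    (Eventually.of_forall fun _ => zero_le_one) (Eventually.of_forall fun x => abs_nonneg (ρ x))
    (memLp_const 1) hL2
  simp only [one_mul, ← Real.sqrt_eq_rpow, rpow_two, sq_abs] at holder
  simpa [intervalIntegral.integral_of_le hab, hab] using holder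

theorem intervalIntegral.abs_integral_primitive_mul_le {ρ f : ℝ → ℝ} {a b K : ℝ} (hab : a ≤ b)
    (hρ : IntervalIntegrable ρ volume a b) (hf : IntervalIntegrable f volume a b)
    (hK : ∀ x ∈ Icc a b, |∫ s in a..x, f s| ≤ K) :
    |∫ x in a..b, (∫ s in a..x, ρ s) * f x| ≤ 2 * K * ∫ x in a..b, |ρ x| := by
  have hρΦ : IntervalIntegrable (fun x => ρ x * ∫ s in a..x, f s) volume a b :=
    hρ.mul_continuousOn (intervalIntegral.continuousOn_primitive_interval' hf left_mem_uIcc)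
  have h_end : |(∫ x in a..b, ρ x) * ∫ x in a..b, f x| ≤ (∫ x in a..b, |ρ x|) * K := by
    rw [abs_mul]
    exact mul_le_mul (intervalIntegral.abs_integral_le_integral_abs hab)
      (hK b ⟨hab, le_rfl⟩) (abs_nonneg _)
      (intervalIntegral.integral_nonneg hab fun x _ => abs_nonneg _)
  have h_bulk : |∫ x in a..b, ρ x * ∫ s in a..x, f s| ≤ (∫ x in a..b, |ρ x|) * K := by
    rw [← intervalIntegral.integral_mul_const]
    refine (intervalIntegral.abs_integral_le_integral_abs hab).trans
      (intervalIntegral.integral_mono_on hab hρΦ.abs (hρ.abs.mul_const K) fun x hx => ?_)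
    rw [abs_mul]
    exact mul_le_mul_of_nonneg_left (hK x hx) (abs_nonneg _)
  rw [intervalIntegral.integral_primitive_mul_eq hρ hf]
  linarith [abs_sub _ _ |>.trans (add_le_add h_end h_bulk)]

/-- `ρ` need not be integrable on all of `[a, b]`: where it is not, its primitive is the junk
value `0`, and the bound extends from the integrable range by continuity. -/
theorem intervalIntegral.abs_integral_primitive_mul_le_of_forall_intervalIntegrable
    {ρ f : ℝ → ℝ} {a b M : ℝ} (hab : a ≤ b)
    (hint : IntervalIntegrable (fun x => (∫ s in a..x, ρ s) * f x) volume a b)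
    (hM : ∀ t ∈ Icc a b, IntervalIntegrable ρ volume a t →
      |∫ x in a..t, (∫ s in a..x, ρ s) * f x| ≤ M) :
    |∫ x in a..b, (∫ s in a..x, ρ s) * f x| ≤ M := by
  set A := {t ∈ Icc a b | IntervalIntegrable ρ volume a t}
  have haA : a ∈ A := ⟨left_mem_Icc.2 hab, .refl⟩
  have hA : BddAbove A := ⟨b, fun t ht => ht.1.2⟩
  have ht₀ : sSup A ∈ Icc a b := ⟨le_csSup hA haA, csSup_le ⟨a, haA⟩ fun t ht => ht.1.2⟩
  have hgood : IsClosed (Icc a b ∩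
      (fun t => |∫ x in a..t, (∫ s in a..x, ρ s) * f x|) ⁻¹' Iic M) := by
    have hcont := (intervalIntegral.continuousOn_primitive_interval' hint left_mem_uIcc).abs
    rw [uIcc_of_le hab] at hcont
    exact hcont.preimage_isClosed_of_isClosed isClosed_Icc isClosed_Iic
  have hA_good : A ⊆ Icc a b ∩
      (fun t => |∫ x in a..t, (∫ s in a..x, ρ s) * f x|) ⁻¹' Iic M :=
    fun t ht => ⟨ht.1, hM t ht.1 ht.2⟩
  have h_sup := (closure_minimal hA_good hgood (csSup_mem_closure ⟨a, haA⟩ hA)).2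
  have h_tail : ∫ x in sSup A..b, (∫ s in a..x, ρ s) * f x = 0 := by
    rw [intervalIntegral.integral_of_le ht₀.2]
    refine setIntegral_eq_zero_of_forall_eq_zero fun x hx => ?_
    have hxA : x ∉ A := fun h => (le_csSup hA h).not_gt hx.1
    rw [intervalIntegral.integral_undef fun hρ => hxA ⟨⟨ht₀.1.trans hx.1.le, hx.2⟩, hρ⟩,
      zero_mul]
  rw [← uIcc_of_le hab] at ht₀
  rwa [← intervalIntegral.integral_add_adjacent_intervals
    (hint.mono_set (uIcc_subset_uIcc_left ht₀)) (hint.mono_set (uIcc_subset_uIcc_right ht₀)),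
    h_tail, add_zero]

theorem intervalIntegral.abs_integral_primitive_mul_le_of_integral_sq_le
    {ρ f : ℝ → ℝ} {a b C K : ℝ} (hab : a ≤ b) (hC : 0 ≤ C)
    (hρ2 : IntervalIntegrable (fun x => ρ x ^ 2) volume a b) (hρC : ∫ x in a..b, ρ x ^ 2 ≤ C ^ 2)
    (hf : IntervalIntegrable f volume a b) (hK : ∀ x ∈ Icc a b, |∫ s in a..x, f s| ≤ K)
    (hint : IntervalIntegrable (fun x => (∫ s in a..x, ρ s) * f x) volume a b) :
    |∫ x in a..b, (∫ s in a..x, ρ s) * f x| ≤ 2 * C * √(b - a) * K := by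
  have hK0 : 0 ≤ K := (abs_nonneg _).trans (hK a (left_mem_Icc.2 hab))
  refine intervalIntegral.abs_integral_primitive_mul_le_of_forall_intervalIntegrable hab hint
    fun t ht hρ => ?_
  have hsub : uIcc a t ⊆ uIcc a b := uIcc_subset_uIcc_left (by rwa [uIcc_of_le hab])
  have hρC_t : √(∫ x in a..t, ρ x ^ 2) ≤ C := by
    refine Real.sqrt_le_iff.2 ⟨hC, le_trans ?_ hρC⟩
    exact intervalIntegral.integral_mono_interval le_rfl ht.1 ht.2
      (Eventually.of_forall fun x => sq_nonneg (ρ x)) hρ2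
  calc |∫ x in a..t, (∫ s in a..x, ρ s) * f x|
      ≤ 2 * K * ∫ x in a..t, |ρ x| :=
        intervalIntegral.abs_integral_primitive_mul_le ht.1 hρ (hf.mono_set hsub)
          fun x hx => hK x ⟨hx.1, hx.2.trans ht.2⟩
    _ ≤ 2 * K * (√(t - a) * √(∫ x in a..t, ρ x ^ 2)) := by
        gcongr
        exact intervalIntegral.integral_abs_le_sqrt_mul_sqrt ht.1 hρ (hρ2.mono_set hsub)
    _ ≤ 2 * K * (√(b - a) * C) := by gcongr; exact ht.2
    _ = 2 * C * √(b - a) * K := by ring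

theorem relaxNorm_nonneg (T : ℝ) (u : ℝ → ℝ) : 0 ≤ relaxNorm T u :=
  Real.sSup_nonneg (by rintro x ⟨t, -, rfl⟩; exact abs_nonneg _)

theorem relaxNorm_le {T M : ℝ} {u : ℝ → ℝ} (hM : 0 ≤ M)
    (h : ∀ t ∈ Icc 0 T, |∫ τ in (0:ℝ)..t, u τ| ≤ M) : relaxNorm T u ≤ M :=
  Real.sSup_le (by rintro x ⟨t, ht, rfl⟩; exact h t ht) hM

theorem abs_integral_le_relaxNorm {T t : ℝ} {u : ℝ → ℝ} (hu : IntervalIntegrable u volume 0 T)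
    (ht : t ∈ Icc 0 T) : |∫ τ in (0:ℝ)..t, u τ| ≤ relaxNorm T u := by
  have hcont := (intervalIntegral.continuousOn_primitive_interval' hu left_mem_uIcc).abs
  rw [uIcc_of_le (ht.1.trans ht.2)] at hcont
  exact le_csSup (isCompact_Icc.bddAbove_image hcont) ⟨t, ht, rfl⟩

theorem abs_integral_mul_le_relaxNorm {T C τ : ℝ} {f r r' : ℝ → ℝ} (hC : 0 ≤ C)
    (hf : IntervalIntegrable f volume 0 T)
    (hr : ∀ t ∈ Icc 0 T, r t = r 0 + ∫ s in (0:ℝ)..t, r' s)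
    (hr'2 : IntervalIntegrable (fun s => r' s ^ 2) volume 0 T)
    (hbound : r 0 ^ 2 + ∫ s in (0:ℝ)..T, r' s ^ 2 ≤ C ^ 2)
    (hrf : IntervalIntegrable (fun t => r t * f t) volume 0 T) (hτ : τ ∈ Icc 0 T) :
    |∫ t in (0:ℝ)..τ, r t * f t| ≤ C * (1 + 2 * √τ) * relaxNorm T f := by
  have hsub : uIcc 0 τ ⊆ uIcc 0 T := uIcc_subset_uIcc_left (by rwa [uIcc_of_le (hτ.1.trans hτ.2)])
  have hK : ∀ x ∈ Icc 0 τ, |∫ s in (0:ℝ)..x, f s| ≤ relaxNorm T f :=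
    fun x hx => abs_integral_le_relaxNorm hf ⟨hx.1, hx.2.trans hτ.2⟩
  have hr'T : 0 ≤ ∫ s in (0:ℝ)..T, r' s ^ 2 :=
    intervalIntegral.integral_nonneg (hτ.1.trans hτ.2) fun s _ => sq_nonneg (r' s)
  have hr'τ : ∫ s in (0:ℝ)..τ, r' s ^ 2 ≤ C ^ 2 := by
    have := intervalIntegral.integral_mono_interval le_rfl hτ.1 hτ.2
      (Eventually.of_forall fun s => sq_nonneg (r' s)) hr'2
    nlinarith [sq_nonneg (r 0)]
  have hr0 : |r 0| ≤ C := abs_le_of_sq_le_sq (by linarith) hC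
  have hsplit : EqOn (fun t => r t * f t)
      (fun t => r 0 * f t + (∫ s in (0:ℝ)..t, r' s) * f t) (uIcc 0 τ) := fun t ht => by
    simp only [hr t (uIcc_of_le (hτ.1.trans hτ.2) ▸ hsub ht)]
    ring
  have hint : IntervalIntegrable (fun t => (∫ s in (0:ℝ)..t, r' s) * f t) volume 0 τ := by
    refine (intervalIntegrable_congr fun t ht => ?_).1
      ((hrf.mono_set hsub).sub ((hf.mono_set hsub).const_mul (r 0)))
    simp only [hsplit (uIoc_subset_uIcc ht)]
    ring
  rw [intervalIntegral.integral_congr hsplit,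
    intervalIntegral.integral_add ((hf.mono_set hsub).const_mul (r 0)) hint,
    intervalIntegral.integral_const_mul]
  have hprim := intervalIntegral.abs_integral_primitive_mul_le_of_integral_sq_le hτ.1 hC
    (hr'2.mono_set hsub) hr'τ (hf.mono_set hsub) hK hint
  rw [sub_zero] at hprim
  calc _ ≤ |r 0| * |∫ t in (0:ℝ)..τ, f t| + |∫ t in (0:ℝ)..τ, (∫ s in (0:ℝ)..t, r' s) * f t| :=
        (abs_add_le _ _).trans_eq (by rw [abs_mul])
    _ ≤ C * relaxNorm T f + 2 * C * √τ * relaxNorm T f :=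
        add_le_add (mul_le_mul hr0 (hK τ (right_mem_Icc.2 hτ.1)) (abs_nonneg _) hC) hprim
    _ = C * (1 + 2 * √τ) * relaxNorm T f := by ring

theorem relax_product_estimate_and_convergence_general
    {B : Type*} (T : ℝ) (C : ℝ) (hC : 0 ≤ C)
    (φ : ℕ → ℝ → ℝ) (hφint : ∀ n, IntervalIntegrable (φ n) volume 0 T)
    (hφ : Tendsto (fun n => relaxNorm T (φ n)) atTop (nhds 0))
    (r r' : B → ℝ → ℝ)
    (hAC : ∀ β, ∀ t ∈ Set.Icc (0:ℝ) T, r β t = r β 0 + ∫ s in (0:ℝ)..t, r' β s)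
    (hr'L2 : ∀ β, IntervalIntegrable (fun s => (r' β s) ^ 2) volume 0 T)
    (hbound : ∀ β, (r β 0) ^ 2 + ∫ s in (0:ℝ)..T, (r' β s) ^ 2 ≤ C ^ 2)
    (hprod : ∀ β n, IntervalIntegrable (fun t => r β t * φ n t) volume 0 T) :
    (∀ β n, ∀ τ ∈ Set.Icc (0:ℝ) T,
      |∫ t in (0:ℝ)..τ, r β t * φ n t| ≤
        C * (1 + 2 * Real.sqrt τ) * relaxNorm T (φ n)) ∧
    (∀ ε > 0, ∃ N : ℕ, ∀ n ≥ N, ∀ β,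
      relaxNorm T (fun t => r β t * φ n t) ≤ ε) := by
  have hest : ∀ β n, ∀ τ ∈ Icc (0:ℝ) T,
      |∫ t in (0:ℝ)..τ, r β t * φ n t| ≤ C * (1 + 2 * √τ) * relaxNorm T (φ n) :=
    fun β n τ hτ => abs_integral_mul_le_relaxNorm hC (hφint n) (hAC β) (hr'L2 β) (hbound β)
      (hprod β n) hτ
  refine ⟨hest, fun ε hε => ?_⟩
  have hprod_le : ∀ β n, relaxNorm T (fun t => r β t * φ n t) ≤
      C * (1 + 2 * √T) * relaxNorm T (φ n) := fun β n => by
    have hK := relaxNorm_nonneg T (φ n)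
    exact relaxNorm_le (by positivity) fun τ hτ => (hest β n τ hτ).trans (by gcongr; exact hτ.2)
  have hlim : Tendsto (fun n => C * (1 + 2 * √T) * relaxNorm T (φ n)) atTop (nhds 0) := by
    simpa using hφ.const_mul (C * (1 + 2 * √T))
  obtain ⟨N, hN⟩ := eventually_atTop.1 (hlim.eventually (ge_mem_nhds hε))
  exact ⟨N, fun n hn β => (hprod_le β n).trans (hN n hn)⟩

theorem relax_product_estimate_and_convergence
    {B : Type*} (T : ℝ) (hT : 0 < T) (C : ℝ) (hC : 0 ≤ C)
    (φ : ℕ → ℝ → ℝ) (hφint : ∀ n, IntervalIntegrable (φ n) volume 0 T)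
    (hφ : Tendsto (fun n => relaxNorm T (φ n)) atTop (nhds 0))
    (r r' : B → ℝ → ℝ)
    (hAC : ∀ β, ∀ t ∈ Set.Icc (0:ℝ) T, r β t = r β 0 + ∫ s in (0:ℝ)..t, r' β s)
    (hr'L2 : ∀ β, IntervalIntegrable (fun s => (r' β s) ^ 2) volume 0 T)
    (hbound : ∀ β, (r β 0) ^ 2 + ∫ s in (0:ℝ)..T, (r' β s) ^ 2 ≤ C ^ 2)
    (hprod : ∀ β n, IntervalIntegrable (fun t => r β t * φ n t) volume 0 T) :
    (∀ β n, ∀ τ ∈ Set.Icc (0:ℝ) T,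
      |∫ t in (0:ℝ)..τ, r β t * φ n t| ≤
        C * (1 + 2 * Real.sqrt τ) * relaxNorm T (φ n)) ∧
    (∀ ε > 0, ∃ N : ℕ, ∀ n ≥ N, ∀ β,
      relaxNorm T (fun t => r β t * φ n t) ≤ ε) :=
  relax_product_estimate_and_convergence_general T C hC φ hφint hφ r r' hAC hr'L2 hbound hprod
end

section
/- The symmetric set K¹ = {(1,0), (−1,0), (1,1), (−1,−1)} ⊂ ℤ² is saturating: with Kʲ = K^{j−1} ∪ {m+n : m,n ∈ K^{j−1}, |m| ≠ |n|, m ∧ n ≠ 0}, one has ⋃_{j≥1} Kʲ = ℤ² \ {0}. -/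
/-- External product `m ∧ n = m₁n₂ − m₂n₁` of two integer vectors. -/
def wedge (m n : ℤ × ℤ) : ℤ := m.1 * n.2 - m.2 * n.1

/-- Squared Euclidean length of an integer vector. -/
def sqnorm (m : ℤ × ℤ) : ℤ := m.1 ^ 2 + m.2 ^ 2

/-- Inductive set generated from the four base modes by admissible sums. -/
inductive Gen : ℤ × ℤ → Prop
  | b1 : Gen (1, 0)
  | b2 : Gen (-1, 0)
  | b3 : Gen (1, 1)
  | b4 : Gen (-1, -1)
  | add {m n : ℤ × ℤ} : Gen m → Gen n → sqnorm m ≠ sqnorm n → wedge m n ≠ 0 →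
      Gen (m + n)

lemma sqnorm_neg (p : ℤ × ℤ) : sqnorm (-p) = sqnorm p := by
  simp [sqnorm]

lemma Gen.neg {p : ℤ × ℤ} (h : Gen p) : Gen (-p) := by
  induction h with
  | b1 => have e : (-((1:ℤ),(0:ℤ)) : ℤ × ℤ) = (-1, 0) := by decide
          rw [e]; exact Gen.b2
  | b2 => have e : (-((-1:ℤ),(0:ℤ)) : ℤ × ℤ) = (1, 0) := by decide
          rw [e]; exact Gen.b1
  | b3 => have e : (-((1:ℤ),(1:ℤ)) : ℤ × ℤ) = (-1, -1) := by decide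
          rw [e]; exact Gen.b4
  | b4 => have e : (-((-1:ℤ),(-1:ℤ)) : ℤ × ℤ) = (1, 1) := by decide
          rw [e]; exact Gen.b3
  | add hm hn hsq hw ihm ihn =>
      rw [neg_add]
      refine Gen.add ihm ihn ?_ ?_
      · rwa [sqnorm_neg, sqnorm_neg]
      · simpa [wedge] using hw

lemma gen01 : Gen (0, 1) := by
  have := Gen.add Gen.b2 Gen.b3 (by decide) (by decide)
  simpa using this

lemma gen0m1 : Gen (0, -1) := by
  have := Gen.add Gen.b1 Gen.b4 (by decide) (by decide)
  simpa using this

lemma gen21 : Gen (2, 1) := by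
  have := Gen.add Gen.b1 Gen.b3 (by decide) (by decide)
  simpa using this

lemma gen20 : Gen (2, 0) := by
  have := Gen.add gen21 gen0m1 (by decide) (by decide)
  simpa using this

lemma gen1m1 : Gen (1, -1) := by
  have := Gen.add gen20 Gen.b4 (by decide) (by decide)
  simpa using this

lemma genm11 : Gen (-1, 1) := by
  have := gen1m1.neg
  simpa using this

lemma gen12 : Gen (1, 2) := by
  have := Gen.add Gen.b3 gen01 (by decide) (by decide)
  simpa using this

lemma gen02 : Gen (0, 2) := by
  have := Gen.add gen12 Gen.b2 (by decide) (by decide)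
  simpa using this

lemma mk_ne_zero {x y : ℤ} (h : ¬(x = 0 ∧ y = 0)) : ((x, y) : ℤ × ℤ) ≠ 0 := by
  simp only [ne_eq, Prod.ext_iff, Prod.fst_zero, Prod.snd_zero]
  tauto

lemma genR (a b : ℤ)
    (hR : (1 ≤ a ∧ -a ≤ b ∧ b ≤ a) ∨ (1 ≤ b ∧ -b < a ∧ a < b))
    (IH : ∀ q : ℤ × ℤ, sqnorm q < sqnorm (a, b) → q ≠ 0 → Gen q) :
    Gen ((a, b) : ℤ × ℤ) := by
  rcases hR with ⟨ha, hb1, hb2⟩ | ⟨hb, ha1, ha2⟩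
  · -- a-dominant: 1 ≤ a, |b| ≤ a
    rcases eq_or_lt_of_le ha with ha1 | ha2
    · -- a = 1, b ∈ {-1, 0, 1}
      have : b = -1 ∨ b = 0 ∨ b = 1 := by omega
      rcases this with rfl | rfl | rfl
      · rw [← ha1]; exact gen1m1
      · rw [← ha1]; exact Gen.b1
      · rw [← ha1]; exact Gen.b3
    · -- 2 ≤ a
      have ha2' : 2 ≤ a := ha2
      by_cases hb0 : b = 0
      · subst hb0
        rcases eq_or_lt_of_le ha2' with h2 | h3
        · rw [← h2]; exact gen20
        · -- 3 ≤ a : (a, 0) = (a-1, -1) + (1, 1)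
          have h3' : 3 ≤ a := h3
          have hq : Gen ((a - 1, -1) : ℤ × ℤ) := by
            refine IH _ ?_ (mk_ne_zero (by omega))
            simp only [sqnorm]
            nlinarith
          have hadd := Gen.add hq Gen.b3
            (by simp only [sqnorm]; nlinarith)
            (by simp only [wedge]; omega)
          have e : ((a - 1, -1) : ℤ × ℤ) + (1, 1) = (a, 0) := by
            simp [Prod.ext_iff]
          rwa [e] at hadd
      · -- b ≠ 0 : (a, b) = (a-1, b) + (1, 0)
        have hq : Gen ((a - 1, b) : ℤ × ℤ) := by
          refine IH _ ?_ (mk_ne_zero (by omega))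
          simp only [sqnorm]
          nlinarith
        have hb' : b ≤ -1 ∨ 1 ≤ b := by omega
        have hb2' : 1 ≤ b ^ 2 := by rcases hb' with h | h <;> nlinarith
        have hadd := Gen.add hq Gen.b1
          (by simp only [sqnorm]; nlinarith)
          (by simp only [wedge]; omega)
        have e : ((a - 1, b) : ℤ × ℤ) + (1, 0) = (a, b) := by
          simp [Prod.ext_iff]
        rwa [e] at hadd
  · -- b-dominant: 1 ≤ b, |a| < b
    by_cases ha0 : a = 0
    · subst ha0
      have : b = 1 ∨ b = 2 ∨ 3 ≤ b := by omega
      rcases this with rfl | rfl | h3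
      · exact gen01
      · exact gen02
      · -- (0, b) = (1, b-1) + (-1, 1)
        have hq : Gen ((1, b - 1) : ℤ × ℤ) := by
          refine IH _ ?_ (mk_ne_zero (by omega))
          simp only [sqnorm]
          nlinarith
        have hadd := Gen.add hq genm11
          (by simp only [sqnorm]; nlinarith)
          (by simp only [wedge]; omega)
        have e : ((1, b - 1) : ℤ × ℤ) + (-1, 1) = (0, b) := by
          simp [Prod.ext_iff]
        rwa [e] at hadd
    · -- a ≠ 0, so 2 ≤ b : (a, b) = (a, b-1) + (0, 1)
      have hb2 : 2 ≤ b := by omega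
      have ha' : a ≤ -1 ∨ 1 ≤ a := by omega
      have ha2 : 1 ≤ a ^ 2 := by rcases ha' with h | h <;> nlinarith
      have hq : Gen ((a, b - 1) : ℤ × ℤ) := by
        refine IH _ ?_ (mk_ne_zero (by omega))
        simp only [sqnorm]
        nlinarith
      have hadd := Gen.add hq gen01
        (by simp only [sqnorm]; nlinarith)
        (by simp only [wedge]; omega)
      have e : ((a, b - 1) : ℤ × ℤ) + (0, 1) = (a, b) := by
        simp [Prod.ext_iff]
      rwa [e] at hadd

lemma gen_of_ne_zero (p : ℤ × ℤ) (hp : p ≠ 0) : Gen p := by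
  have key : ∀ N : ℕ, ∀ p : ℤ × ℤ, (sqnorm p).toNat ≤ N → p ≠ 0 → Gen p := by
    intro N
    induction N with
    | zero =>
      rintro ⟨a, b⟩ h h0
      exfalso
      have hnn : (0:ℤ) ≤ sqnorm (a, b) := by
        simp only [sqnorm]; positivity
      have : sqnorm (a, b) = 0 := by omega
      simp only [sqnorm] at this
      have ha : a = 0 := by nlinarith [sq_nonneg a, sq_nonneg b]
      have hb : b = 0 := by nlinarith [sq_nonneg a, sq_nonneg b]
      exact h0 (by simp [Prod.ext_iff, ha, hb])
    | succ N ih =>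
      rintro ⟨a, b⟩ hle hne
      have IH : ∀ q : ℤ × ℤ, sqnorm q < sqnorm (a, b) → q ≠ 0 → Gen q := by
        intro q hlt hq
        refine ih q ?_ hq
        have hnn : (0:ℤ) ≤ sqnorm q := by
          simp only [sqnorm]; positivity
        omega
      have hne' : ¬(a = 0 ∧ b = 0) := by
        intro ⟨h1, h2⟩; exact hne (by simp [Prod.ext_iff, h1, h2])
      have hdich : ((1 ≤ a ∧ -a ≤ b ∧ b ≤ a) ∨ (1 ≤ b ∧ -b < a ∧ a < b)) ∨
          ((1 ≤ -a ∧ -(-a) ≤ -b ∧ -b ≤ -a) ∨ (1 ≤ -b ∧ -(-b) < -a ∧ -a < -b)) := by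
        omega
      rcases hdich with hR | hR
      · exact genR a b hR IH
      · have hsq : sqnorm ((-a, -b) : ℤ × ℤ) = sqnorm (a, b) := by
          simp only [sqnorm]; ring
        have IH' : ∀ q : ℤ × ℤ, sqnorm q < sqnorm ((-a, -b) : ℤ × ℤ) → q ≠ 0 → Gen q := by
          intro q hlt hq; exact IH q (by rwa [hsq] at hlt) hq
        have := (genR (-a) (-b) hR IH').neg
        simpa using this
  exact key (sqnorm p).toNat p le_rfl hp

theorem four_modes_saturating
    (Ks : ℕ → Set (ℤ × ℤ))
    (hK0 : Ks 0 = {((1:ℤ),(0:ℤ)), (-1,0), (1,1), (-1,-1)})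
    (hKsucc : ∀ j, Ks (j + 1) = Ks j ∪
      {p | ∃ m ∈ Ks j, ∃ n ∈ Ks j,
        sqnorm m ≠ sqnorm n ∧ wedge m n ≠ 0 ∧ p = m + n}) :
    (⋃ j, Ks j) = {p : ℤ × ℤ | p ≠ 0} := by
  have mono : ∀ i j : ℕ, i ≤ j → Ks i ⊆ Ks j := by
    intro i j hij
    induction j with
    | zero => simp_all
    | succ j ih =>
      rcases Nat.lt_or_ge i (j + 1) with h | h
      · have := ih (by omega)
        rw [hKsucc j]
        exact this.trans Set.subset_union_left
      · have : i = j + 1 := by omega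
        subst this; exact le_refl _
  have gen_mem : ∀ p : ℤ × ℤ, Gen p → p ∈ ⋃ j, Ks j := by
    intro p hp
    induction hp with
    | b1 => exact Set.mem_iUnion.2 ⟨0, by rw [hK0]; simp⟩
    | b2 => exact Set.mem_iUnion.2 ⟨0, by rw [hK0]; simp⟩
    | b3 => exact Set.mem_iUnion.2 ⟨0, by rw [hK0]; simp⟩
    | b4 => exact Set.mem_iUnion.2 ⟨0, by rw [hK0]; simp⟩
    | @add m n hm hn hsq hw ihm ihn =>
      obtain ⟨i, hi⟩ := Set.mem_iUnion.1 ihm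
      obtain ⟨j, hj⟩ := Set.mem_iUnion.1 ihn
      refine Set.mem_iUnion.2 ⟨max i j + 1, ?_⟩
      rw [hKsucc]
      exact Or.inr ⟨m, mono i _ (le_max_left i j) hi,
        n, mono j _ (le_max_right i j) hj, hsq, hw, rfl⟩
  have nonzero : ∀ j : ℕ, ∀ p ∈ Ks j, p ≠ 0 := by
    intro j
    induction j with
    | zero =>
      rw [hK0]
      rintro p (rfl | rfl | rfl | rfl) <;> decide
    | succ j ih =>
      rw [hKsucc]
      rintro p (hp | ⟨m, hm, n, hn, hsq, hw, rfl⟩)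
      · exact ih p hp
      · intro h0
        apply hsq
        have : n = -m := by
          have := eq_neg_of_add_eq_zero_right h0
          exact this
        rw [this, sqnorm_neg]
  ext p
  simp only [Set.mem_iUnion, Set.mem_setOf_eq]
  constructor
  · rintro ⟨j, hj⟩
    exact nonzero j p hj
  · intro hp
    exact Set.mem_iUnion.1 (gen_mem p (gen_of_ne_zero p hp))
end
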